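/- For a Bernstein function φ and all u > 0, the second derivative satisfies |φ''(u)| ≤ 4 φ(u)/u², and hence |φ''(u)|/φ(u) ≤ 4/u². -/

import Mathlib

/-!
Pointwise, `t² e^{-t} ≤ 2 (1 - e^{-t})` for `t ≥ 0` (multiply `1 + t + t²/2 ≤ e^t` by `e^{-t}`).
Taking `t = u y` and integrating against the Lévy measure bounds `|φ''(u)| = ∫ y² e^{-uy} Π(dy)`
by `2/u²` times the jump part `∫ (1 - e^{-uy}) Π(dy)` of `φ(u)`, which is at most `φ(u)`.
-/

open MeasureTheory Real

lemma sq_mul_exp_neg_le_two_mul_one_sub_exp_neg {t : ℝ} (ht : 0 ≤ t) :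
    t ^ 2 * exp (-t) ≤ 2 * (1 - exp (-t)) := by
  have hquad := mul_le_mul_of_nonneg_right (quadratic_le_exp_of_nonneg ht) (exp_pos (-t)).le
  have hexp : exp t * exp (-t) = 1 := by rw [← exp_add, add_neg_cancel, exp_zero]
  nlinarith [mul_nonneg ht (exp_pos (-t)).le]

lemma sq_mul_exp_neg_mul_le {u y : ℝ} (hu : 0 < u) (hy : 0 ≤ y) :
    y ^ 2 * exp (-u * y) ≤ 2 / u ^ 2 * (1 - exp (-u * y)) := by
  have h := sq_mul_exp_neg_le_two_mul_one_sub_exp_neg (mul_nonneg hu.le hy)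
  rw [neg_mul_eq_neg_mul, mul_pow] at h
  rw [div_mul_eq_mul_div, le_div_iff₀ (by positivity)]
  linarith

lemma one_sub_exp_neg_mul_nonneg {u y : ℝ} (hu : 0 ≤ u) (hy : 0 ≤ y) :
    0 ≤ 1 - exp (-u * y) := by
  rw [sub_nonneg, exp_le_one_iff, neg_mul]
  exact neg_nonpos.mpr (mul_nonneg hu hy)

lemma one_sub_exp_neg_mul_le {u y : ℝ} (hy : 0 ≤ y) :
    1 - exp (-u * y) ≤ max u 1 * min y 1 := by
  rcases le_total y 1 with hy1 | hy1
  · rw [min_eq_left hy1]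
    calc 1 - exp (-u * y) ≤ u * y := by
          linarith [neg_mul u y ▸ one_sub_le_exp_neg (u * y)]
      _ ≤ max u 1 * y := mul_le_mul_of_nonneg_right (le_max_left _ _) hy
  · rw [min_eq_right hy1, mul_one]
    linarith [exp_pos (-u * y), le_max_right u 1]

section LevyMeasure

variable {μ : Measure ℝ}

lemma integrable_one_sub_exp_neg_mul (hμ : ∀ᵐ y ∂μ, 0 ≤ y)
    (hmin : Integrable (fun y => min y 1) μ) {u : ℝ} (hu : 0 ≤ u) :
    Integrable (fun y => 1 - exp (-u * y)) μ := by
  refine (hmin.const_mul (max u 1)).mono' (by fun_prop) ?_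
  filter_upwards [hμ] with y hy
  rw [norm_of_nonneg (one_sub_exp_neg_mul_nonneg hu hy)]
  exact one_sub_exp_neg_mul_le hy

lemma integral_sq_mul_exp_neg_mul_le (hμ : ∀ᵐ y ∂μ, 0 ≤ y)
    (hmin : Integrable (fun y => min y 1) μ) {u : ℝ} (hu : 0 < u) :
    ∫ y, y ^ 2 * exp (-u * y) ∂μ ≤ 2 / u ^ 2 * ∫ y, (1 - exp (-u * y)) ∂μ := by
  have hg := (integrable_one_sub_exp_neg_mul hμ hmin hu.le).const_mul (2 / u ^ 2)
  have hbound : ∀ᵐ y ∂μ, y ^ 2 * exp (-u * y) ≤ 2 / u ^ 2 * (1 - exp (-u * y)) :=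
    hμ.mono fun y hy => sq_mul_exp_neg_mul_le hu hy
  have hf : Integrable (fun y => y ^ 2 * exp (-u * y)) μ := by
    refine hg.mono' (by fun_prop) ?_
    filter_upwards [hbound] with y hy
    rwa [norm_of_nonneg (by positivity)]
  rw [← integral_const_mul]
  exact integral_mono_ae hf hg hbound

end LevyMeasure

theorem bernstein_second_deriv_bound_general (φ φ'' : ℝ → ℝ) (φ0 d : ℝ) (hφ0 : 0 ≤ φ0) (hd : 0 ≤ d)
    (μ : Measure ℝ) (hμ0 : μ (Set.Iic 0) = 0)
    (hμint : ∫⁻ y, ENNReal.ofReal (min y 1) ∂μ ≠ ⊤)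
    (hrep : ∀ u : ℝ, 0 ≤ u → φ u = φ0 + d * u + ∫ y, (1 - Real.exp (-u * y)) ∂μ)
    (hderiv2 : ∀ u : ℝ, 0 < u → φ'' u = -∫ y, y ^ 2 * Real.exp (-u * y) ∂μ) :
    ∀ u : ℝ, 0 < u → |φ'' u| ≤ 4 * φ u / u ^ 2 ∧ |φ'' u| / φ u ≤ 4 / u ^ 2 := by
  intro u hu
  have hμ : ∀ᵐ y ∂μ, 0 ≤ y := measure_mono_null (fun y (hy : ¬0 ≤ y) => (not_le.mp hy).le) hμ0
  have hmin : Integrable (fun y => min y 1) μ :=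
    ⟨by fun_prop, (hasFiniteIntegral_iff_ofReal (hμ.mono fun y hy => le_min hy zero_le_one)).mpr
      hμint.lt_top⟩
  have hjump : 0 ≤ ∫ y, (1 - exp (-u * y)) ∂μ :=
    integral_nonneg_of_ae (hμ.mono fun y hy => one_sub_exp_neg_mul_nonneg hu.le hy)
  have hjump_le : ∫ y, (1 - exp (-u * y)) ∂μ ≤ φ u := by
    rw [hrep u hu.le]
    linarith [mul_nonneg hd hu.le]
  have hbound : |φ'' u| ≤ 4 * φ u / u ^ 2 :=
    calc |φ'' u| = ∫ y, y ^ 2 * exp (-u * y) ∂μ := by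
          rw [hderiv2 u hu, abs_neg, abs_of_nonneg (integral_nonneg fun y => by positivity)]
      _ ≤ 2 / u ^ 2 * ∫ y, (1 - exp (-u * y)) ∂μ := integral_sq_mul_exp_neg_mul_le hμ hmin hu
      _ ≤ 4 / u ^ 2 * φ u := by gcongr; norm_num
      _ = 4 * φ u / u ^ 2 := by ring
  exact ⟨hbound,
    div_le_of_le_mul₀ (hjump.trans hjump_le) (by positivity) (hbound.trans_eq (by ring))⟩

/-- For a Bernstein function `φ`, with `φ''(u) = -∫ y² e^{-uy} Π(dy)` and `φ(u) > 0`
for `u > 0`, one has `|φ''(u)| ≤ 4 φ(u)/u²`, hence `|φ''(u)|/φ(u) ≤ 4/u²`. -/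
theorem bernstein_second_deriv_bound (φ φ'' : ℝ → ℝ) (φ0 d : ℝ) (hφ0 : 0 ≤ φ0) (hd : 0 ≤ d)
    (μ : Measure ℝ) (hμ0 : μ (Set.Iic 0) = 0)
    (hμint : ∫⁻ y, ENNReal.ofReal (min y 1) ∂μ ≠ ⊤)
    (hrep : ∀ u : ℝ, 0 ≤ u → φ u = φ0 + d * u + ∫ y, (1 - Real.exp (-u * y)) ∂μ)
    (hderiv2 : ∀ u : ℝ, 0 < u → φ'' u = -∫ y, y ^ 2 * Real.exp (-u * y) ∂μ)
    (hpos : ∀ u : ℝ, 0 < u → 0 < φ u) :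
    ∀ u : ℝ, 0 < u → |φ'' u| ≤ 4 * φ u / u ^ 2 ∧ |φ'' u| / φ u ≤ 4 / u ^ 2 :=
  bernstein_second_deriv_bound_general φ φ'' φ0 d hφ0 hd μ hμ0 hμint hrep hderiv2
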